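/- For all positive integers k, n and every i with 1 ≤ i ≤ n, every maximal factor of W_{k,n} over the subalphabet {a_1, ..., a_i} contains at most k occurrences of the letter a_i. More precisely, W_{k,n} has no factor belonging to ({a_1,...,a_{i-1}}^* a_i)^{k+1}, i.e., no factor containing k+1 occurrences of a_i interleaved only with letters a_j for j < i. -/

import Mathlib

/-!
If `i < n`, a factor of `W k n = W k (n-1) · a_n · W (k-1) n` avoiding `a_n` lies inside one of
the two shorter words, so induction on `k + n` applies. Otherwise `a_i` is the largest letter that
can occur in `W k n`, and `W k n` contains it at most `k` times in total.
-/

/-- The word `W k n` over alphabet {1,...,n} (letter `a_i` encoded as `i`):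
`W k 1 = a1^k`, `W 1 n = a1 a2 ... an`, `W k n = W k (n-1) ++ [a_n] ++ W (k-1) n`,
and `W k n = ε` when `k = 0` or `n = 0`. -/
def W : ℕ → ℕ → List ℕ
  | 0, _ => []
  | _+1, 0 => []
  | k+1, n+1 => W (k+1) n ++ (n+1) :: W k (n+1)
termination_by k n => k + n

theorem List.infix_or_infix_of_infix_append_cons_of_not_mem {α : Type*} {l a b : List α} {x : α}
    (h : l <:+: a ++ x :: b) (hx : x ∉ l) : l <:+: a ∨ l <:+: b := by
  have prefix_nil_of_not_mem {l' t : List α} (hp : l' <+: x :: t) (hl' : x ∉ l') : l' = [] := by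
    rcases List.prefix_cons_iff.mp hp with rfl | ⟨t', rfl, -⟩
    · rfl
    · simp at hl'
  rcases List.infix_append_iff.mp h with ha | hb | ⟨l₁, l₂, rfl, hl₁, hl₂⟩
  · exact .inl ha
  · rcases List.infix_cons_iff.mp hb with hp | hb
    · rw [prefix_nil_of_not_mem hp hx]
      exact .inl List.nil_infix
    · exact .inr hb
  · rw [prefix_nil_of_not_mem hl₂ (fun h => hx (List.mem_append_right l₁ h)), List.append_nil]
    exact .inl hl₁.isInfix

theorem W_zero_left (n : ℕ) : W 0 n = [] := by simp [W]

theorem W_zero_right (k : ℕ) : W k 0 = [] := by cases k <;> simp [W]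

theorem W_succ_succ (k n : ℕ) : W (k+1) (n+1) = W (k+1) n ++ (n+1) :: W k (n+1) := by
  rw [W]

theorem le_of_mem_W {k n c : ℕ} (hc : c ∈ W k n) : c ≤ n := by
  match k, n with
  | 0, _ => simp [W_zero_left] at hc
  | _+1, 0 => simp [W_zero_right] at hc
  | k+1, n+1 =>
    rw [W_succ_succ, List.mem_append, List.mem_cons] at hc
    rcases hc with hc | rfl | hc
    · exact (le_of_mem_W hc).trans n.le_succ
    · rfl
    · exact le_of_mem_W hc
termination_by k + n

theorem count_W_succ (k n : ℕ) : (W k (n+1)).count (n+1) = k := by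
  induction k with
  | zero => simp [W_zero_left]
  | succ k ih =>
    have hnot : n + 1 ∉ W (k+1) n := fun h => by have := le_of_mem_W h; omega
    simp [W_succ_succ, List.count_append, List.count_eq_zero_of_not_mem hnot, ih]

theorem count_W_le_of_le {k n i : ℕ} (h : n ≤ i) : (W k n).count i ≤ k := by
  rcases h.eq_or_lt with rfl | hlt
  · cases n with
    | zero => simp [W_zero_right]
    | succ n => exact (count_W_succ k n).le
  · have hnot : i ∉ W k n := fun h => by have := le_of_mem_W h; omega
    simp [List.count_eq_zero_of_not_mem hnot]

theorem count_le_of_infix_W {k n i : ℕ} {f : List ℕ} (hf : f <:+: W k n)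
    (hsub : ∀ c ∈ f, c ≤ i) : f.count i ≤ k := by
  by_cases hni : n ≤ i
  · exact (hf.sublist.count_le i).trans (count_W_le_of_le hni)
  match k, n with
  | 0, n => exact (hf.sublist.count_le i).trans (by simp [W_zero_left])
  | k+1, 0 => omega
  | k+1, n+1 =>
    have hnot : n + 1 ∉ f := fun h => by have := hsub _ h; omega
    rw [W_succ_succ] at hf
    rcases List.infix_or_infix_of_infix_append_cons_of_not_mem hf hnot with hf | hf
    · exact count_le_of_infix_W hf hsub
    · exact (count_le_of_infix_W hf hsub).trans k.le_succ
termination_by k + n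

theorem stmt_4_general (k n : ℕ) (i : ℕ) (f : List ℕ) (hf : f <:+: W k n) (hsub : ∀ c ∈ f, c ≤ i) :
    f.count i ≤ k :=
  count_le_of_infix_W hf hsub

/-- Every factor of `W_{k,n}` over the subalphabet `{a_1, ..., a_i}` contains at
most `k` occurrences of `a_i`; i.e. `W_{k,n}` has no factor containing `k+1`
occurrences of `a_i` interleaved only with letters `a_j`, `j < i`. -/
theorem stmt_4 (k n : ℕ) (hk : 1 ≤ k) (hn : 1 ≤ n) (i : ℕ) (hi : 1 ≤ i)
    (hin : i ≤ n) (f : List ℕ) (hf : f <:+: W k n) (hsub : ∀ c ∈ f, c ≤ i) :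
    f.count i ≤ k :=
  stmt_4_general k n i f hf hsub
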